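/- arXiv:2303.13292 — 4 statements merged into one kernel-verified Lean document; each statement's English description precedes it below -/
import Mathlib

section
/- If G is an n-vertex cubic (3-regular) connected graph with diameter at least 4 and girth at least 5, then there exist a vertex r of G and an r-unsolvable configuration on G of size n + 1; consequently π(G) ≥ n + 2. -/
/-!
Choose `r` and `u` at distance `diam G ≥ 4`. Put one pebble on every vertex at distance at least
`3` from `u` and at least `2` from `r`; as `G` is cubic, this misses at most `10 + 4 = 14`
vertices, so the remaining at most `15` of the `n + 1` pebbles go on `u`. The configuration is
`r`-unsolvable by a weight-function argument: for weights `w` and parity penalties `d` with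
`w y + d y ≤ 2 * w x` on every edge `xy`, the potential `∑ v, (w v * C v - d v * (C v % 2))` never
increases under a pebbling move and is at least `w r - d r = 16` once `r` holds a pebble, while
here it is the number of pebbles on `u`. Since removing pebbles preserves unsolvability, `π(G, r)`
exceeds the size of every `r`-unsolvable configuration.
-/

namespace Pebbling

variable {V : Type*}

/-- A single pebbling move on configurations: remove two pebbles from `u`
(which must have at least two) and add one pebble to an adjacent vertex `w`. -/
def Move (G : SimpleGraph V) (C C' : V → ℕ) : Prop := by
  classical
  exact ∃ u w, G.Adj u w ∧ 2 ≤ C u ∧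
    C' = Function.update (Function.update C u (C u - 2)) w (C w + 1)

/-- A configuration `C` is `r`-solvable if some finite sequence of pebbling moves
starting from `C` produces a configuration with at least one pebble on `r`. -/
def Solvable (G : SimpleGraph V) (C : V → ℕ) (r : V) : Prop :=
  ∃ C', Relation.ReflTransGen (Move G) C C' ∧ 1 ≤ C' r

/-- The pebbling number `π(G, r)`: the least `t` such that every configuration of
size `t` is `r`-solvable. -/
noncomputable def pebblingNumberTo [Fintype V] (G : SimpleGraph V) (r : V) : ℕ :=
  sInf {t | ∀ C : V → ℕ, ∑ x, C x = t → Solvable G C r}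

/-- The pebbling number `π(G)`: the maximum of `π(G, r)` over all vertices `r`. -/
noncomputable def pebblingNumber [Fintype V] (G : SimpleGraph V) : ℕ :=
  Finset.univ.sup fun r => pebblingNumberTo G r

/-- A proper `n`-edge-coloring: a coloring of the edges with `n` colors such that
distinct edges sharing an endpoint receive different colors. -/
def HasProperEdgeColoring (G : SimpleGraph V) (n : ℕ) : Prop :=
  ∃ c : Sym2 V → Fin n, ∀ e₁ ∈ G.edgeSet, ∀ e₂ ∈ G.edgeSet,
    e₁ ≠ e₂ → (∃ x, x ∈ e₁ ∧ x ∈ e₂) → c e₁ ≠ c e₂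

/-- A snark: a connected bridgeless cubic simple graph admitting no proper
3-edge-coloring. -/
def IsSnark [Fintype V] (G : SimpleGraph V) [DecidableRel G.Adj] : Prop :=
  G.Connected ∧ (∀ v, G.degree v = 3) ∧ (∀ e, ¬ G.IsBridge e) ∧
    ¬ HasProperEdgeColoring G 3

section Potential

variable (w d : V → ℤ)

def vertexPotential (v : V) (c : ℕ) : ℤ := w v * c - d v * (c % 2 : ℕ)

def potential [Fintype V] (C : V → ℕ) : ℤ := ∑ v, vertexPotential w d v (C v)

lemma potential_update [Fintype V] [DecidableEq V] (C : V → ℕ) (v : V) (c : ℕ) :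
    potential w d (Function.update C v c) =
      potential w d C + (vertexPotential w d v c - vertexPotential w d v (C v)) := by
  have hpoint : ∀ x, vertexPotential w d x (Function.update C v c x) =
      vertexPotential w d x (C x) +
        if x = v then vertexPotential w d v c - vertexPotential w d v (C v) else 0 := by
    intro x
    by_cases hx : x = v
    · subst hx; simp
    · simp [hx]
  simp only [potential, hpoint, Finset.sum_add_distrib, Finset.sum_ite_eq', Finset.mem_univ,
    if_true]

lemma vertexPotential_sub_two (v : V) {c : ℕ} (hc : 2 ≤ c) :
    vertexPotential w d v (c - 2) = vertexPotential w d v c - 2 * w v := by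
  have hpar : (c - 2) % 2 = c % 2 := by omega
  simp only [vertexPotential, hpar, Nat.cast_sub hc]
  ring

lemma vertexPotential_succ_le (v : V) (c : ℕ) (hd : 0 ≤ d v) :
    vertexPotential w d v (c + 1) ≤ vertexPotential w d v c + (w v + d v) := by
  simp only [vertexPotential]
  rcases Nat.mod_two_eq_zero_or_one c with h | h <;>
  · have h' : (c + 1) % 2 = 1 - c % 2 := by omega
    rw [h', h]
    push_cast
    linarith

lemma sub_le_vertexPotential (v : V) {c : ℕ} (hc : 1 ≤ c) (hd : 0 ≤ d v) (hdw : d v ≤ w v) :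
    w v - d v ≤ vertexPotential w d v c := by
  have hpar : ((c % 2 : ℕ) : ℤ) ≤ 1 := by exact_mod_cast Nat.le_of_lt_succ (Nat.mod_lt c two_pos)
  have hc' : (1 : ℤ) ≤ c := by exact_mod_cast hc
  simp only [vertexPotential]
  nlinarith

lemma vertexPotential_nonneg (v : V) (c : ℕ) (hd : 0 ≤ d v) (hdw : d v ≤ w v) :
    0 ≤ vertexPotential w d v c := by
  rcases Nat.eq_zero_or_pos c with rfl | hc
  · simp [vertexPotential]
  · linarith [sub_le_vertexPotential w d v hc hd hdw]

variable {w d} [Fintype V] {G : SimpleGraph V}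

lemma potential_le_of_move (hd : ∀ v, 0 ≤ d v) (hedge : ∀ x y, G.Adj x y → w y + d y ≤ 2 * w x)
    {C C' : V → ℕ} (h : Move G C C') : potential w d C' ≤ potential w d C := by
  classical
  obtain ⟨x, y, hxy, hx, rfl⟩ := h
  rw [potential_update, potential_update, Function.update_of_ne hxy.ne.symm,
    vertexPotential_sub_two w d x hx]
  linarith [vertexPotential_succ_le w d y (C y) (hd y), hedge x y hxy]

lemma potential_le_of_reflTransGen (hd : ∀ v, 0 ≤ d v)
    (hedge : ∀ x y, G.Adj x y → w y + d y ≤ 2 * w x) {C C' : V → ℕ}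
    (h : Relation.ReflTransGen (Move G) C C') : potential w d C' ≤ potential w d C := by
  induction h with
  | refl => exact le_rfl
  | tail _ hmove ih => exact (potential_le_of_move hd hedge hmove).trans ih

theorem not_solvable_of_potential_lt (hd : ∀ v, 0 ≤ d v) (hdw : ∀ v, d v ≤ w v)
    (hedge : ∀ x y, G.Adj x y → w y + d y ≤ 2 * w x) {C : V → ℕ} {r : V}
    (hC : potential w d C < w r - d r) : ¬ Solvable G C r := by
  rintro ⟨C', hCC', hr⟩
  have hlow : w r - d r ≤ potential w d C' :=
    (sub_le_vertexPotential w d r hr (hd r) (hdw r)).trans <|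
      Finset.single_le_sum (fun v _ => vertexPotential_nonneg w d v (C' v) (hd v) (hdw v))
        (Finset.mem_univ r)
  linarith [potential_le_of_reflTransGen hd hedge hCC']

end Potential

section Solvability

variable {G : SimpleGraph V}

lemma Solvable.of_reflTransGen {C C' : V → ℕ} {r : V} (h : Relation.ReflTransGen (Move G) C C')
    (hC' : Solvable G C' r) : Solvable G C r :=
  let ⟨C'', hC'C'', hr⟩ := hC'
  ⟨C'', h.trans hC'C'', hr⟩

lemma Move.exists_move_le {C C' D : V → ℕ} (h : Move G C C') (hCD : C ≤ D) :
    ∃ D', Move G D D' ∧ C' ≤ D' := by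
  classical
  obtain ⟨x, y, hxy, hx, rfl⟩ := h
  refine ⟨_, ⟨x, y, hxy, hx.trans (hCD x), rfl⟩, fun v => ?_⟩
  have hv : C v ≤ D v := hCD v
  have hx' : C x ≤ D x := hCD x
  have hy : C y ≤ D y := hCD y
  simp only [Function.update_apply]
  split_ifs <;> subst_vars <;> omega

lemma exists_reflTransGen_move_le {C C' D : V → ℕ} (h : Relation.ReflTransGen (Move G) C C')
    (hCD : C ≤ D) : ∃ D', Relation.ReflTransGen (Move G) D D' ∧ C' ≤ D' := by
  induction h with
  | refl => exact ⟨D, .refl, hCD⟩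
  | tail _ hmove ih =>
    obtain ⟨D₁, hDD₁, hle⟩ := ih
    obtain ⟨D₂, hD₁D₂, hle₂⟩ := hmove.exists_move_le hle
    exact ⟨D₂, hDD₁.tail hD₁D₂, hle₂⟩

lemma Solvable.mono {C D : V → ℕ} {r : V} (hCD : C ≤ D) (h : Solvable G C r) :
    Solvable G D r := by
  obtain ⟨C', hCC', hr⟩ := h
  obtain ⟨D', hDD', hC'D'⟩ := exists_reflTransGen_move_le hCC' hCD
  exact ⟨D', hDD', hr.trans (hC'D' r)⟩

lemma reflTransGen_move_of_adj {x y : V} (hxy : G.Adj x y) (k : ℕ) {C : V → ℕ}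
    (hC : 2 * k ≤ C x) : ∃ C', Relation.ReflTransGen (Move G) C C' ∧ C y + k ≤ C' y := by
  classical
  induction k generalizing C with
  | zero => exact ⟨C, .refl, le_rfl⟩
  | succ k ih =>
    set C₁ := Function.update (Function.update C x (C x - 2)) y (C y + 1)
    have hmove : Move G C C₁ := ⟨x, y, hxy, by omega, rfl⟩
    have hC₁x : C₁ x = C x - 2 := by simp [C₁, hxy.ne]
    have hC₁y : C₁ y = C y + 1 := by simp [C₁]
    obtain ⟨C', hC₁C', hy⟩ := ih (C := C₁) (by omega)
    exact ⟨C', .head hmove hC₁C', by omega⟩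

lemma exists_adj_dist_eq_of_dist_eq_add_one {u v : V} {n : ℕ} (h : G.dist u v = n + 1) :
    ∃ s, G.Adj u s ∧ G.dist s v = n := by
  obtain ⟨p, hp⟩ := SimpleGraph.exists_walk_of_dist_ne_zero (by omega : G.dist u v ≠ 0)
  cases p with
  | nil => simp at h
  | cons hus q =>
    rw [SimpleGraph.Walk.length_cons] at hp
    have hle : G.dist _ v ≤ n := (SimpleGraph.dist_le q).trans (by omega)
    have hge := q.reachable.dist_triangle_right u
    rw [SimpleGraph.dist_eq_one_iff_adj.mpr hus] at hge
    exact ⟨_, hus, by omega⟩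

lemma solvable_of_two_pow_dist_le (hconn : G.Connected) {C : V → ℕ} {v r : V}
    (hv : 2 ^ G.dist v r ≤ C v) : Solvable G C r := by
  induction hd : G.dist v r generalizing v C with
  | zero =>
    obtain rfl := hconn.dist_eq_zero_iff.mp hd
    exact ⟨C, .refl, by simpa [hd] using hv⟩
  | succ n ih =>
    obtain ⟨s, hvs, hs⟩ := exists_adj_dist_eq_of_dist_eq_add_one hd
    obtain ⟨C', hCC', hC's⟩ := reflTransGen_move_of_adj hvs (2 ^ n) (C := C)
      (by rw [hd, pow_succ] at hv; omega)
    exact .of_reflTransGen hCC' (ih (v := s) (by rw [hs]; omega) hs)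

variable [Fintype V]

lemma solvable_of_card_mul_two_pow_le (hconn : G.Connected) (r : V) {C : V → ℕ}
    (hC : Fintype.card V * 2 ^ Fintype.card V ≤ ∑ v, C v) : Solvable G C r := by
  have : Nonempty V := hconn.nonempty
  obtain ⟨v, -, hv⟩ := Finset.exists_le_of_sum_le Finset.univ_nonempty
    (f := fun _ => 2 ^ Fintype.card V) (by simpa using hC)
  have hdist : G.dist v r < Fintype.card V := by
    obtain ⟨p, hp, hlen⟩ := hconn.exists_path_of_dist v r
    exact hlen ▸ hp.length_lt
  exact solvable_of_two_pow_dist_le hconn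
    ((Nat.pow_le_pow_right two_pos hdist.le).trans hv)

lemma exists_le_sum_eq (C : V → ℕ) {t : ℕ} (ht : t ≤ ∑ v, C v) :
    ∃ C' ≤ C, ∑ v, C' v = t := by
  classical
  induction t with
  | zero => exact ⟨0, fun _ => Nat.zero_le _, by simp⟩
  | succ t ih =>
    obtain ⟨C', hC'C, hsum⟩ := ih (by omega)
    obtain ⟨v, -, hv⟩ := Finset.exists_lt_of_sum_lt (hsum ▸ ht : ∑ v, C' v < ∑ v, C v)
    refine ⟨C' + Pi.single v 1, fun x => ?_, ?_⟩
    · by_cases hx : x = v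
      · subst hx; simpa using hv
      · simpa [hx] using hC'C x
    · simp [Finset.sum_add_distrib, hsum]

theorem sum_lt_pebblingNumberTo (hconn : G.Connected) {C : V → ℕ} {r : V}
    (hC : ¬ Solvable G C r) : ∑ v, C v < pebblingNumberTo G r := by
  refine le_csInf ⟨Fintype.card V * 2 ^ Fintype.card V, ?_⟩ fun t ht => ?_
  · exact fun D hD => solvable_of_card_mul_two_pow_le hconn r hD.ge
  by_contra! htC
  obtain ⟨C', hC'C, hsum⟩ := exists_le_sum_eq C (Nat.le_of_lt_succ htC)
  exact hC ((ht C' hsum).mono hC'C)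

end Solvability

section Balls

open Finset

variable [Fintype V] {G : SimpleGraph V} [DecidableRel G.Adj]

lemma card_dist_le_one_le (hconn : G.Connected) {Δ : ℕ} (hdeg : ∀ v, G.degree v ≤ Δ) (u : V) :
    #{v | G.dist u v ≤ 1} ≤ Δ + 1 := by
  classical
  calc #{v | G.dist u v ≤ 1} ≤ #(insert u (G.neighborFinset u)) := by
        refine card_le_card fun v hv => ?_
        rw [mem_filter_univ] at hv
        rcases Nat.le_one_iff_eq_zero_or_eq_one.mp hv with h | h
        · simp [hconn.dist_eq_zero_iff.mp h]
        · simp [SimpleGraph.dist_eq_one_iff_adj.mp h]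
    _ ≤ Δ + 1 := (card_insert_le _ _).trans (by simpa using hdeg u)

lemma card_dist_le_two_le (hconn : G.Connected) {Δ : ℕ} (hdeg : ∀ v, G.degree v ≤ Δ) (u : V) :
    #{v | G.dist u v ≤ 2} ≤ Δ * Δ + 1 := by
  classical
  calc #{v | G.dist u v ≤ 2}
      ≤ #(insert u ((G.neighborFinset u).biUnion
          fun s => insert s ((G.neighborFinset s).erase u))) := by
        refine card_le_card fun v hv => ?_
        rw [mem_filter_univ] at hv
        simp only [mem_insert, mem_biUnion, SimpleGraph.mem_neighborFinset, mem_erase]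
        interval_cases h : G.dist u v
        · exact .inl (hconn.dist_eq_zero_iff.mp h).symm
        · exact .inr ⟨v, SimpleGraph.dist_eq_one_iff_adj.mp h, .inl rfl⟩
        · obtain ⟨s, hus, hsv⟩ := exists_adj_dist_eq_of_dist_eq_add_one h
          refine .inr ⟨s, hus, .inr ⟨fun hvu => ?_, SimpleGraph.dist_eq_one_iff_adj.mp hsv⟩⟩
          simp [hvu] at h
    _ ≤ ∑ s ∈ G.neighborFinset u, #(insert s ((G.neighborFinset s).erase u)) + 1 :=
        (card_insert_le _ _).trans (Nat.add_le_add_right card_biUnion_le 1)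
    _ ≤ ∑ s ∈ G.neighborFinset u, Δ + 1 := by
        gcongr with s hs
        have hu : u ∈ G.neighborFinset s := by simpa [SimpleGraph.adj_comm] using hs
        have hpos : 0 < G.degree s := by
          rw [← SimpleGraph.card_neighborFinset_eq_degree]; exact card_pos.mpr ⟨u, hu⟩
        calc _ ≤ #((G.neighborFinset s).erase u) + 1 := card_insert_le _ _
          _ = G.degree s := by
            rw [card_erase_of_mem hu, SimpleGraph.card_neighborFinset_eq_degree]; omega
          _ ≤ Δ := hdeg s
    _ ≤ Δ * Δ + 1 := by
        rw [sum_const, smul_eq_mul, SimpleGraph.card_neighborFinset_eq_degree]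
        gcongr
        exact hdeg u

end Balls

section Weight

variable (G : SimpleGraph V) (r u : V)

abbrev IsRemote (v : V) : Prop := 3 ≤ G.dist u v ∧ 2 ≤ G.dist r v

/-- The weight decays by halves from `16` at `r` and grows by doubling from `1` at `u` until it is
capped at `4`; both terms at most halve along an edge, and so does their maximum. -/
noncomputable def distWeight (v : V) : ℤ := max (2 ^ (4 - G.dist r v)) (min 4 (2 ^ G.dist u v))

/-- Remote vertices have weight `4` and only neighbours of weight at least `4`, which leaves room
for a penalty `4`: a single pebble on a remote vertex then contributes nothing to the potential. -/
noncomputable def remotePenalty (v : V) : ℤ := if IsRemote G r u v then 4 else 0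

variable {G r u}

lemma distWeight_adj_le {x y : V} (hxy : G.Adj x y) :
    distWeight G r u y ≤ 2 * distWeight G r u x := by
  have hr := hxy.diff_dist_adj (u := r)
  have hu := hxy.diff_dist_adj (u := u)
  rw [distWeight, distWeight, mul_max_of_nonneg _ _ zero_le_two,
    mul_min_of_nonneg _ _ zero_le_two, ← pow_succ', ← pow_succ']
  exact max_le_max (pow_le_pow_right₀ one_le_two (by omega))
    (min_le_min (by norm_num) (pow_le_pow_right₀ one_le_two (by omega)))

lemma distWeight_eq_four {v : V} (hu : 2 ≤ G.dist u v) (hr : 2 ≤ G.dist r v) :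
    distWeight G r u v = 4 := by
  have hr' : (2 : ℤ) ^ (4 - G.dist r v) ≤ 2 ^ 2 := pow_le_pow_right₀ one_le_two (by omega)
  have hu' : (2 : ℤ) ^ 2 ≤ 2 ^ G.dist u v := pow_le_pow_right₀ one_le_two hu
  rw [distWeight, min_eq_left (by simpa using hu')]
  exact max_eq_right (by simpa using hr')

lemma four_le_distWeight {v : V} (hu : 2 ≤ G.dist u v) : 4 ≤ distWeight G r u v := by
  have : (2 : ℤ) ^ 2 ≤ 2 ^ G.dist u v := pow_le_pow_right₀ one_le_two hu
  exact le_max_of_le_right (le_min le_rfl (by simpa using this))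

lemma distWeight_add_remotePenalty_le {x y : V} (hxy : G.Adj x y) :
    distWeight G r u y + remotePenalty G r u y ≤ 2 * distWeight G r u x := by
  by_cases hy : IsRemote G r u y
  · have hux : 2 ≤ G.dist u x := by have := hxy.diff_dist_adj (u := u); omega
    rw [remotePenalty, if_pos hy, distWeight_eq_four (by omega) hy.2]
    linarith [four_le_distWeight (r := r) hux]
  · rw [remotePenalty, if_neg hy, add_zero]
    exact distWeight_adj_le hxy

lemma remotePenalty_nonneg (v : V) : 0 ≤ remotePenalty G r u v := by
  unfold remotePenalty; split_ifs <;> norm_num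

lemma remotePenalty_le_distWeight (v : V) : remotePenalty G r u v ≤ distWeight G r u v := by
  unfold remotePenalty
  split_ifs with hv
  · exact four_le_distWeight (by omega)
  · exact le_max_of_le_left (by positivity)

lemma distWeight_self_left : distWeight G r u r = 16 := by
  rw [distWeight, SimpleGraph.dist_self]
  exact max_eq_left ((min_le_left _ _).trans (by norm_num))

lemma remotePenalty_self_left : remotePenalty G r u r = 0 := by simp [remotePenalty]

lemma distWeight_self_right (hru : 4 ≤ G.dist r u) : distWeight G r u u = 1 := by
  rw [distWeight, SimpleGraph.dist_self, Nat.sub_eq_zero_of_le hru]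
  norm_num

lemma remotePenalty_self_right : remotePenalty G r u u = 0 := by simp [remotePenalty]

end Weight

open Finset in
lemma card_le_card_remote_add [Fintype V] {G : SimpleGraph V} [DecidableRel G.Adj]
    (hconn : G.Connected) (hdeg : ∀ v, G.degree v ≤ 3) (r u : V) :
    Fintype.card V ≤ #{v | IsRemote G r u v} + 14 := by
  classical
  have hcompl : ({v | IsRemote G r u v} : Finset V)ᶜ ⊆
      ({v | G.dist u v ≤ 2} : Finset V) ∪ ({v | G.dist r v ≤ 1} : Finset V) := by
    intro v
    simp only [compl_filter, mem_filter_univ, mem_union]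
    omega
  have := (card_le_card hcompl).trans (card_union_le _ _)
  rw [card_compl] at this
  have := card_dist_le_two_le hconn hdeg u
  have := card_dist_le_one_le hconn hdeg r
  omega

open Finset in
theorem exists_not_solvable_of_four_le_dist [Fintype V] {G : SimpleGraph V} [DecidableRel G.Adj]
    (hconn : G.Connected) (hdeg : ∀ v, G.degree v ≤ 3) {r u : V} (hru : 4 ≤ G.dist r u) :
    ∃ C : V → ℕ, ∑ v, C v = Fintype.card V + 1 ∧ ¬ Solvable G C r := by
  have hcard := card_le_card_remote_add hconn hdeg r u
  classical
  set F : Finset V := {v | IsRemote G r u v}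
  have huF : u ∉ F := by simp [F]
  set k := Fintype.card V + 1 - #F
  set C : V → ℕ := fun v => (if v ∈ F then 1 else 0) + if v = u then k else 0
  refine ⟨C, ?_, not_solvable_of_potential_lt (w := distWeight G r u) (d := remotePenalty G r u)
    remotePenalty_nonneg remotePenalty_le_distWeight
    (fun _ _ => distWeight_add_remotePenalty_le) ?_⟩
  · simp only [C, sum_add_distrib, sum_boole, sum_ite_eq', mem_univ, if_true, filter_mem_eq_inter,
      univ_inter, Nat.cast_id]
    have := card_le_univ F
    omega
  · have hpot : ∀ v, vertexPotential (distWeight G r u) (remotePenalty G r u) v (C v) =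
        if v = u then (k : ℤ) else 0 := by
      intro v
      by_cases hvF : v ∈ F
      · have hvu : v ≠ u := by rintro rfl; exact huF hvF
        have hCv : C v = 1 := by simp [C, hvF, hvu]
        have hv : IsRemote G r u v := by simpa [F] using hvF
        rw [hCv, vertexPotential, remotePenalty, if_pos hv, distWeight_eq_four (by omega) hv.2,
          if_neg hvu]
        norm_num
      · by_cases hvu : v = u
        · subst hvu
          simp [C, vertexPotential, hvF, distWeight_self_right hru, remotePenalty_self_right]
        · simp [C, vertexPotential, hvF, hvu]
    have hk : k ≤ 15 := by omega
    rw [potential, Finset.sum_congr rfl fun v _ => hpot v, sum_ite_eq', if_pos (mem_univ u),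
      distWeight_self_left, remotePenalty_self_left]
    omega

theorem cubic_diam4_girth5_unsolvable_config_general
    {V : Type*} [Fintype V] (G : SimpleGraph V) [DecidableRel G.Adj]
    (hconn : G.Connected)
    (hcubic : ∀ v, G.degree v = 3)
    (hdiam : 4 ≤ G.diam) :
    (∃ r : V, ∃ C : V → ℕ, (∑ x, C x) = Fintype.card V + 1 ∧ ¬ Solvable G C r) ∧
      Fintype.card V + 2 ≤ pebblingNumber G := by
  have : Nonempty V := hconn.nonempty
  obtain ⟨r, u, hru⟩ := G.exists_dist_eq_diam
  obtain ⟨C, hsize, hC⟩ :=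
    exists_not_solvable_of_four_le_dist hconn (fun v => (hcubic v).le) (hru ▸ hdiam)
  refine ⟨⟨r, C, hsize, hC⟩, ?_⟩
  calc Fintype.card V + 2 ≤ pebblingNumberTo G r := by
        have := sum_lt_pebblingNumberTo hconn hC
        omega
    _ ≤ pebblingNumber G := Finset.le_sup (f := fun r => pebblingNumberTo G r) (Finset.mem_univ r)

/-- an n-vertex cubic connected graph with diameter ≥ 4 and girth ≥ 5
has an r-unsolvable configuration of size n + 1 for some vertex r, hence
π(G) ≥ n + 2. -/
theorem cubic_diam4_girth5_unsolvable_config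
    {V : Type*} [Fintype V] (G : SimpleGraph V) [DecidableRel G.Adj]
    (hconn : G.Connected)
    (hcubic : ∀ v, G.degree v = 3)
    (hdiam : 4 ≤ G.diam)
    (hgirth : 5 ≤ G.girth) :
    (∃ r : V, ∃ C : V → ℕ, (∑ x, C x) = Fintype.card V + 1 ∧ ¬ Solvable G C r) ∧
      Fintype.card V + 2 ≤ pebblingNumber G :=
  cubic_diam4_girth5_unsolvable_config_general G hconn hcubic hdiam

end Pebbling
end

section
/- (Weight Function Lemma) Let G be a finite simple connected graph, r a vertex of G, and T a subtree of G containing r with at least two vertices, rooted at r; for a non-root vertex v of T let v⁺ denote its parent in T (the T-neighbor of v one step closer to r). Let w : V(G) → ℚ≥0 satisfy w(r) = 0, w(v) = 0 for every vertex v not in T, and w(v⁺) ≥ 2·w(v) for every vertex v of T other than r whose parent is not r. If C is an r-unsolvable configuration on G, then Σ_{v ∈ V(G)} w(v)·C(v) ≤ Σ_{v ∈ V(T)} w(v). -/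
/-!
If an `r`-unsolvable configuration has two pebbles on a non-root vertex `v` of `T` whose parent
is not `r`, moving a pebble from `v` to its parent keeps it unsolvable, costs `2 w(v)` and gains
`w(v⁺) ≥ 2 w(v)`, so the weight does not drop while the size does (and a parent equal to `r`
would solve it). Eventually every non-root vertex of `T` carries at most one pebble, and then the
weight is at most `∑_{v ∈ T} w(v)` because `w` vanishes at `r` and off `T`.
-/

namespace Pebbling

variable {V : Type*}

theorem not_solvable_of_move {G : SimpleGraph V} {C C' : V → ℕ} {r : V}
    (hm : Move G C C') (hC : ¬ Solvable G C r) : ¬ Solvable G C' r :=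
  fun ⟨D, hD, hDr⟩ => hC ⟨D, hD.head hm, hDr⟩

theorem sum_comp_update_add {M : Type*} [Fintype V] [DecidableEq V] [AddCommMonoid M]
    (φ : V → ℕ → M) (C : V → ℕ) (u : V) (a : ℕ) :
    ∑ x, φ x (Function.update C u a x) + φ u (C u) = ∑ x, φ x (C x) + φ u a := by
  rw [Fintype.sum_eq_add_sum_compl u, Fintype.sum_eq_add_sum_compl u (fun x => φ x (C x)),
    Function.update_self, Finset.sum_congr rfl fun x hx => by
      rw [Function.update_of_ne (by simpa using hx)]]
  abel

-- A pebbling move only when `2 ≤ C u`; otherwise `C u - 2` truncates.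
open Classical in
noncomputable def moveAlong (C : V → ℕ) (u t : V) : V → ℕ :=
  Function.update (Function.update C u (C u - 2)) t (C t + 1)

theorem move_moveAlong {G : SimpleGraph V} {C : V → ℕ} {u t : V} (hadj : G.Adj u t)
    (hu : 2 ≤ C u) : Move G C (moveAlong C u t) :=
  ⟨u, t, hadj, hu, rfl⟩

theorem moveAlong_apply_right (C : V → ℕ) (u t : V) : moveAlong C u t t = C t + 1 := by
  classical exact Function.update_self ..

theorem solvable_of_adj {G : SimpleGraph V} {C : V → ℕ} {u r : V} (hadj : G.Adj u r)
    (hu : 2 ≤ C u) : Solvable G C r :=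
  ⟨_, .single (move_moveAlong hadj hu), by rw [moveAlong_apply_right]; omega⟩

theorem sum_moveAlong [Fintype V] {C : V → ℕ} {u t : V} (hu : 2 ≤ C u) (hne : u ≠ t) :
    ∑ x, moveAlong C u t x + 1 = ∑ x, C x := by
  classical
  have h₁ := sum_comp_update_add (fun _ m => m) (Function.update C u (C u - 2)) t (C t + 1)
  have h₂ := sum_comp_update_add (fun _ m => m) C u (C u - 2)
  simp only [Function.update_of_ne hne.symm] at h₁
  unfold moveAlong
  omega

section Weight

variable [Fintype V] {R : Type*} [CommRing R]

def weight (w : V → R) (C : V → ℕ) : R :=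
  ∑ x, w x * C x

theorem weight_moveAlong (w : V → R) {C : V → ℕ} {u t : V} (hu : 2 ≤ C u) (hne : u ≠ t) :
    weight w (moveAlong C u t) = weight w C - 2 * w u + w t := by
  classical
  have h₁ := sum_comp_update_add (fun x m => w x * (m : R))
    (Function.update C u (C u - 2)) t (C t + 1)
  have h₂ := sum_comp_update_add (fun x m => w x * (m : R)) C u (C u - 2)
  simp only [Function.update_of_ne hne.symm, Nat.cast_sub hu] at h₁ h₂
  unfold weight moveAlong
  push_cast at h₁ h₂
  linear_combination h₁ + h₂

variable [PartialOrder R] [IsOrderedRing R] {w : V → R} {S : Finset V} {r : V}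

theorem weight_le_sum_of_le_one (hw0 : ∀ x, 0 ≤ w x) (hwr : w r = 0)
    (hwout : ∀ x ∉ S, w x = 0) {C : V → ℕ} (hC : ∀ x ∈ S, x ≠ r → C x ≤ 1) :
    weight w C ≤ ∑ x ∈ S, w x := by
  rw [weight, ← Finset.sum_subset (Finset.subset_univ S) fun x _ hx => by rw [hwout x hx, zero_mul]]
  refine Finset.sum_le_sum fun x hx => ?_
  obtain rfl | hxr := eq_or_ne x r
  · rw [hwr, zero_mul]
  · exact mul_le_of_le_one_right (hw0 x) ((Nat.mono_cast (hC x hx hxr)).trans_eq Nat.cast_one)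

theorem weight_le_of_not_solvable {G : SimpleGraph V} (hw0 : ∀ x, 0 ≤ w x) (hwr : w r = 0)
    (hwout : ∀ x ∉ S, w x = 0)
    (hstep : ∀ v ∈ S, v ≠ r → ∃ t, G.Adj v t ∧ (t = r ∨ 2 * w v ≤ w t))
    {C : V → ℕ} (hC : ¬ Solvable G C r) :
    weight w C ≤ ∑ x ∈ S, w x := by
  induction hn : ∑ x, C x using Nat.strong_induction_on generalizing C with
  | _ n ih =>
  by_cases hsmall : ∀ x ∈ S, x ≠ r → C x ≤ 1
  · exact weight_le_sum_of_le_one hw0 hwr hwout hsmall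
  push Not at hsmall
  obtain ⟨v, hvS, hvr, hv⟩ := hsmall
  obtain ⟨t, hadj, rfl | hwt⟩ := hstep v hvS hvr
  · exact absurd (solvable_of_adj hadj hv) hC
  calc weight w C ≤ weight w (moveAlong C v t) := by
        rw [weight_moveAlong w hv hadj.ne, sub_add_eq_add_sub, add_sub_assoc]
        exact le_add_of_nonneg_right (sub_nonneg.mpr hwt)
    _ ≤ ∑ x ∈ S, w x :=
        ih _ (by have := sum_moveAlong hv hadj.ne; omega)
          (not_solvable_of_move (move_moveAlong hadj hv) hC) rfl

end Weight

open scoped Classical in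
theorem weight_function_lemma_general
    {V : Type*} [Fintype V] (G : SimpleGraph V)
    (r : V)
    (T : G.Subgraph) (hr : r ∈ T.verts)
    (p : T.verts → T.verts)
    (hparent : ∀ x : T.verts, (x : V) ≠ r →
      T.coe.Adj x (p x) ∧ T.coe.dist (p x) ⟨r, hr⟩ + 1 = T.coe.dist x ⟨r, hr⟩)
    (w : V → ℚ)
    (hw0 : ∀ x, 0 ≤ w x)
    (hwr : w r = 0)
    (hwout : ∀ x, x ∉ T.verts → w x = 0)
    (hwp : ∀ x : T.verts, (x : V) ≠ r → ((p x : V) ≠ r) → 2 * w x ≤ w (p x))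
    (C : V → ℕ) (hC : ¬ Solvable G C r) :
    ∑ x, w x * (C x : ℚ) ≤ ∑ x ∈ T.verts.toFinset, w x := by
  refine weight_le_of_not_solvable hw0 hwr (fun x hx => hwout x (by simpa using hx)) ?_ hC
  intro v hv hvr
  let x : T.verts := ⟨v, by simpa using hv⟩
  refine ⟨p x, T.adj_sub (hparent x hvr).1, ?_⟩
  by_cases hpr : (p x : V) = r
  · exact .inl hpr
  · exact .inr (hwp x hvr hpr)

open scoped Classical in
/-- Weight Function Lemma: let T be a subtree of G containing r with
at least two vertices, rooted at r, with parent map p (the T-neighbor one step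
closer to r).  If w vanishes at r and off T, and w(v⁺) ≥ 2·w(v) for every
non-root vertex v of T whose parent is not r, then every r-unsolvable
configuration C satisfies Σ_v w(v)·C(v) ≤ Σ_{v ∈ V(T)} w(v). -/
theorem weight_function_lemma
    {V : Type*} [Fintype V] (G : SimpleGraph V)
    (hconn : G.Connected) (r : V)
    (T : G.Subgraph) (hr : r ∈ T.verts) (hT2 : 2 ≤ T.verts.ncard)
    (htree : T.coe.IsTree)
    (p : T.verts → T.verts)
    (hparent : ∀ x : T.verts, (x : V) ≠ r →
      T.coe.Adj x (p x) ∧ T.coe.dist (p x) ⟨r, hr⟩ + 1 = T.coe.dist x ⟨r, hr⟩)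
    (w : V → ℚ)
    (hw0 : ∀ x, 0 ≤ w x)
    (hwr : w r = 0)
    (hwout : ∀ x, x ∉ T.verts → w x = 0)
    (hwp : ∀ x : T.verts, (x : V) ≠ r → ((p x : V) ≠ r) → 2 * w x ≤ w (p x))
    (C : V → ℕ) (hC : ¬ Solvable G C r) :
    ∑ x, w x * (C x : ℚ) ≤ ∑ x ∈ T.verts.toFinset, w x :=
  weight_function_lemma_general G r T hr p hparent w hw0 hwr hwout hwp C hC

end Pebbling
end

section
/- For every integer k ≥ 1, with m = 2k+1, the Flower snark J_m has diameter k + 2. -/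
/-!
The inner cycle `v_0 … v_{2k}` has length `m`, and the rim is a single cycle of length `2m` on
which `x_i` and `y_i`, the two rim neighbours of `z_i`, are antipodal. So any two `v` are at
distance at most `k`, every rim vertex is within `k + 1` of every `z`, and passing through a
neighbouring `z` or `v` bounds every distance by `k + 2`.

For the lower bound, the circular distance of the index from `0` changes by at most one along
every edge, and still does after raising it by one at the centres `z_i`, `i ≠ 0`, and lowering
it to `-1` at `z_0`; this potential is `-1` at `z_0` and `k + 1` at `z_k`.
-/

namespace Pebbling

variable {V : Type*}

/-- Generating relation for the Flower snark J_m, m = 2k+1.  A vertex `(t, i)`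
is `v_i, x_i, y_i, z_i` for `t = 0, 1, 2, 3` respectively. -/
def flowerRel (k : ℕ) : Fin 4 × ZMod (2 * k + 1) → Fin 4 × ZMod (2 * k + 1) → Prop :=
  fun p q =>
    (p.1 = 3 ∧ q.1 ≠ 3 ∧ p.2 = q.2) ∨
    (p.1 = 0 ∧ q.1 = 0 ∧ q.2 = p.2 + 1) ∨
    (p.1 = 1 ∧ q.1 = 1 ∧ q.2 = p.2 + 1 ∧ p.2 ≠ (k : ZMod (2 * k + 1))) ∨
    (p.1 = 2 ∧ q.1 = 2 ∧ q.2 = p.2 + 1 ∧ p.2 ≠ (k : ZMod (2 * k + 1))) ∨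
    (p.1 = 1 ∧ q.1 = 2 ∧ p.2 = (k : ZMod (2 * k + 1)) ∧ q.2 = (k : ZMod (2 * k + 1)) + 1) ∨
    (p.1 = 2 ∧ q.1 = 1 ∧ p.2 = (k : ZMod (2 * k + 1)) ∧ q.2 = (k : ZMod (2 * k + 1)) + 1)

/-- The Flower snark J_m on 4m vertices, m = 2k+1. -/
def flowerSnark (k : ℕ) : SimpleGraph (Fin 4 × ZMod (2 * k + 1)) :=
  SimpleGraph.fromRel (flowerRel k)

end Pebbling

namespace SimpleGraph

variable {V : Type*} {G : SimpleGraph V}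

theorem Walk.sub_le_length {f : V → ℤ} (hf : ∀ u v, G.Adj u v → f v ≤ f u + 1) {u v : V}
    (p : G.Walk u v) : f v - f u ≤ p.length := by
  induction p with
  | nil => simp
  | cons h _ ih =>
    have := hf _ _ h
    push_cast [Walk.length_cons]
    linarith

theorem le_edist_of_lipschitz {f : V → ℤ} (hf : ∀ u v, G.Adj u v → f v ≤ f u + 1) {u v : V}
    {n : ℕ} (h : f u + n ≤ f v) : (n : ℕ∞) ≤ G.edist u v :=
  le_iInf fun p => by
    have := p.sub_le_length hf
    exact_mod_cast (by omega : n ≤ p.length)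

theorem edist_le_natAbs_sub {f : ℤ → V} (hf : ∀ n, G.Adj (f n) (f (n + 1))) (a b : ℤ) :
    G.edist (f a) (f b) ≤ (b - a).natAbs := by
  have forward (a : ℤ) (n : ℕ) : G.edist (f a) (f (a + n)) ≤ n := by
    induction n with
    | zero => simp
    | succ n ih =>
      calc G.edist (f a) (f (a + ↑(n + 1)))
          ≤ G.edist (f a) (f (a + n)) + G.edist (f (a + n)) (f (a + n + 1)) := by
            rw [Nat.cast_succ, ← add_assoc]; exact SimpleGraph.edist_triangle
        _ ≤ n + 1 := add_le_add ih (edist_eq_one_iff_adj.mpr (hf _)).le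
  rcases le_total a b with hab | hab
  · obtain ⟨n, rfl⟩ := Int.le.dest hab
    simpa using forward a n
  · obtain ⟨n, rfl⟩ := Int.le.dest hab
    simpa [edist_comm] using forward b n

theorem exists_intCast_eq_edist_le_half {f : ℤ → V} (hf : ∀ n, G.Adj (f n) (f (n + 1))) {m : ℕ}
    [NeZero m] (n : ℤ) (i : ZMod m) : ∃ n' : ℤ, (n' : ZMod m) = i ∧
      G.edist (f n') (f n) ≤ (m / 2 : ℕ) := by
  set δ := ((n : ZMod m) - i).valMinAbs
  refine ⟨n - δ, by simp [δ, ZMod.coe_valMinAbs], ?_⟩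
  calc G.edist (f (n - δ)) (f n) ≤ (n - (n - δ)).natAbs := edist_le_natAbs_sub hf _ _
    _ ≤ (m / 2 : ℕ) := by
      rw [sub_sub_cancel]; exact_mod_cast ZMod.natAbs_valMinAbs_le _

end SimpleGraph

theorem ZMod.natAbs_valMinAbs_le_add_sub {n : ℕ} (a b : ZMod n) :
    a.valMinAbs.natAbs ≤ b.valMinAbs.natAbs + (a - b).valMinAbs.natAbs :=
  calc a.valMinAbs.natAbs = (b + (a - b)).valMinAbs.natAbs := by rw [add_sub_cancel]
    _ ≤ (b.valMinAbs + (a - b).valMinAbs).natAbs := ZMod.natAbs_valMinAbs_add_le _ _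
    _ ≤ _ := Int.natAbs_add_le _ _

theorem Int.add_one_emod_cases (n : ℤ) {M : ℤ} (hM : 0 < M) :
    (n + 1) % M = n % M + 1 ∨ (n % M = M - 1 ∧ (n + 1) % M = 0) := by
  have hr₀ := Int.emod_nonneg n hM.ne'
  have hr₁ := Int.emod_lt_of_pos n hM
  rw [Int.add_emod]
  rcases lt_or_ge 1 M with h₁ | h₁
  · rw [Int.emod_eq_of_lt (by omega) h₁]
    rcases lt_or_ge (n % M + 1) M with h | h
    · exact Or.inl (Int.emod_eq_of_lt (by omega) h)
    · right
      rw [show n % M + 1 = M by omega, Int.emod_self]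
      omega
  · right
    obtain rfl : M = 1 := by omega
    simp

namespace Pebbling

section FlowerSnark

variable {k : ℕ}

lemma flowerRel_cases {p q : Fin 4 × ZMod (2 * k + 1)} (h : flowerRel k p q) :
    (p.1 = 3 ∧ q.1 ≠ 3 ∧ p.2 = q.2) ∨ (p.1 ≠ 3 ∧ q.1 ≠ 3 ∧ q.2 = p.2 + 1) := by
  rcases h with h | ⟨h1, h2, h3⟩ | ⟨h1, h2, h3, -⟩ | ⟨h1, h2, h3, -⟩ | ⟨h1, h2, h3, h4⟩ |
      ⟨h1, h2, h3, h4⟩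
  · exact Or.inl h
  all_goals right; simp_all

lemma flowerSnark_adj_of_rel (hk : 1 ≤ k) {p q : Fin 4 × ZMod (2 * k + 1)}
    (h : flowerRel k p q) : (flowerSnark k).Adj p q := by
  have : Fact (1 < 2 * k + 1) := ⟨by omega⟩
  refine (SimpleGraph.fromRel_adj _ p q).mpr ⟨?_, Or.inl h⟩
  rintro rfl
  rcases flowerRel_cases h with ⟨h1, h2, -⟩ | ⟨-, -, h3⟩
  · exact h2 h1
  · simp at h3

lemma flowerSnark_adj_spoke (hk : 1 ≤ k) {t : Fin 4} (ht : t ≠ 3) (i : ZMod (2 * k + 1)) :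
    (flowerSnark k).Adj (3, i) (t, i) :=
  flowerSnark_adj_of_rel hk (Or.inl ⟨rfl, ht, rfl⟩)

lemma flowerSnark_adj_inner (hk : 1 ≤ k) (i : ZMod (2 * k + 1)) :
    (flowerSnark k).Adj (0, i) (0, i + 1) :=
  flowerSnark_adj_of_rel hk (Or.inr (Or.inl ⟨rfl, rfl, rfl⟩))

/-- The outer cycle `x_0 … x_k y_{k+1} … y_{2k} y_0 … y_k x_{k+1} … x_{2k}` of length `2m`,
run through periodically: position `n` has index `n mod m`. -/
def outerCycle (k : ℕ) (n : ℤ) : Fin 4 × ZMod (2 * k + 1) :=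
  (if (k : ℤ) < n % (2 * (2 * k + 1)) ∧ n % (2 * (2 * k + 1)) ≤ 3 * k + 1 then 2 else 1, n)

lemma outerCycle_snd_eq_k_iff (n : ℤ) : (outerCycle k n).2 = k ↔
    n % (2 * (2 * k + 1)) = k ∨ n % (2 * (2 * k + 1)) = 3 * k + 1 := by
  have hr0 := Int.emod_nonneg n (by omega : (2 * (2 * k + 1) : ℤ) ≠ 0)
  have hr1 := Int.emod_lt_of_pos n (by omega : (0 : ℤ) < 2 * (2 * k + 1))
  change (n : ZMod (2 * k + 1)) = k ↔ _
  rw [← Int.cast_natCast, ZMod.intCast_eq_intCast_iff', ← Int.mod_mul_left_mod n 2]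
  push_cast
  rw [Int.emod_eq_of_lt (by omega) (by omega : (k : ℤ) < 2 * k + 1)]
  rcases lt_or_ge (n % (2 * (2 * k + 1))) (2 * k + 1) with h | h
  · rw [Int.emod_eq_of_lt hr0 h]; omega
  · rw [← Int.sub_emod_right, Int.emod_eq_of_lt (by omega) (by omega)]; omega

lemma outerCycle_adj (hk : 1 ≤ k) (n : ℤ) :
    (flowerSnark k).Adj (outerCycle k n) (outerCycle k (n + 1)) := by
  apply flowerSnark_adj_of_rel hk
  have hr0 := Int.emod_nonneg n (by omega : (2 * (2 * k + 1) : ℤ) ≠ 0)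
  have hr1 := Int.emod_lt_of_pos n (by omega : (0 : ℤ) < 2 * (2 * k + 1))
  have hidx := outerCycle_snd_eq_k_iff (k := k) n
  have hsucc := Int.add_one_emod_cases n (by omega : (0 : ℤ) < 2 * (2 * k + 1))
  have hsnd : (outerCycle k (n + 1)).2 = (outerCycle k n).2 + 1 := by
    simp [outerCycle]
  by_cases hx : n % (2 * (2 * k + 1)) = k
  · have hn := hidx.mpr (Or.inl hx)
    refine Or.inr (Or.inr (Or.inr (Or.inr (Or.inl ⟨?_, ?_, hn, by rw [hsnd, hn]⟩)))) <;>
      simp [outerCycle, hx]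
    omega
  by_cases hy : n % (2 * (2 * k + 1)) = 3 * k + 1
  · have hn := hidx.mpr (Or.inr hy)
    refine Or.inr (Or.inr (Or.inr (Or.inr (Or.inr ⟨?_, ?_, hn, by rw [hsnd, hn]⟩)))) <;>
      simp [outerCycle, hy] <;> omega
  have hk' : (outerCycle k n).2 ≠ k := fun h => by have := hidx.mp h; omega
  by_cases hmid : (k : ℤ) < n % (2 * (2 * k + 1)) ∧ n % (2 * (2 * k + 1)) ≤ 3 * k + 1
  · refine Or.inr (Or.inr (Or.inr (Or.inl ⟨?_, ?_, hsnd, hk'⟩))) <;> simp [outerCycle, hmid]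
    omega
  · refine Or.inr (Or.inr (Or.inl ⟨?_, ?_, hsnd, hk'⟩)) <;> simp [outerCycle, hmid]
    omega

lemma outerCycle_fst_ne_three (n : ℤ) : (outerCycle k n).1 ≠ 3 := by
  unfold outerCycle; split_ifs <;> dsimp only <;> decide

lemma exists_outerCycle_eq {t : Fin 4} (ht : t = 1 ∨ t = 2) (j : ZMod (2 * k + 1)) :
    ∃ n, outerCycle k n = (t, j) := by
  have hj := ZMod.val_lt j
  have hm : ((2 * k + 1 : ℕ) : ZMod (2 * k + 1)) = 0 := ZMod.natCast_self _
  push_cast at hm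
  have h₀ : outerCycle k j.val = (if k < j.val then 2 else 1, j) := by
    rw [outerCycle, Int.emod_eq_of_lt (by omega) (by omega)]
    refine Prod.ext ?_ (by simp)
    split_ifs <;> first | rfl | omega
  have h₁ : outerCycle k (j.val + (2 * k + 1)) = (if j.val ≤ k then 2 else 1, j) := by
    rw [outerCycle, Int.emod_eq_of_lt (by omega) (by omega)]
    refine Prod.ext ?_ (by simp [hm])
    split_ifs <;> first | rfl | omega
  by_cases hlow : j.val ≤ k <;> rcases ht with rfl | rfl
  · exact ⟨_, h₀.trans (by rw [if_neg (by omega)])⟩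
  · exact ⟨_, h₁.trans (by rw [if_pos hlow])⟩
  · exact ⟨_, h₁.trans (by rw [if_neg hlow])⟩
  · exact ⟨_, h₀.trans (by rw [if_pos (by omega)])⟩

lemma flowerSnark_edist_inner_le (hk : 1 ≤ k) (i j : ZMod (2 * k + 1)) :
    (flowerSnark k).edist (0, i) (0, j) ≤ k := by
  obtain ⟨n, hn, h⟩ := SimpleGraph.exists_intCast_eq_edist_le_half (G := flowerSnark k)
    (f := fun n : ℤ => (0, (n : ZMod (2 * k + 1))))
    (fun n => by simpa using flowerSnark_adj_inner hk n) j.valMinAbs i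
  simpa [hn, ZMod.coe_valMinAbs, show (2 * k + 1) / 2 = k by omega] using h

lemma flowerSnark_edist_center_outer_le (hk : 1 ≤ k) (i : ZMod (2 * k + 1)) {t : Fin 4}
    (ht : t = 1 ∨ t = 2) (j : ZMod (2 * k + 1)) :
    (flowerSnark k).edist (3, i) (t, j) ≤ k + 1 := by
  obtain ⟨n, hn⟩ := exists_outerCycle_eq ht j
  obtain ⟨n', hn', h⟩ := SimpleGraph.exists_intCast_eq_edist_le_half (outerCycle_adj hk) n i
  have hspoke : (flowerSnark k).Adj (3, i) (outerCycle k n') := by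
    rw [show outerCycle k n' = ((outerCycle k n').1, i) from Prod.ext rfl hn']
    exact flowerSnark_adj_spoke hk (outerCycle_fst_ne_three n') i
  rw [← hn]
  calc (flowerSnark k).edist (3, i) (outerCycle k n)
      ≤ (flowerSnark k).edist (3, i) (outerCycle k n') +
          (flowerSnark k).edist (outerCycle k n') (outerCycle k n) :=
        SimpleGraph.edist_triangle
    _ ≤ 1 + k := add_le_add (SimpleGraph.edist_eq_one_iff_adj.mpr hspoke).le
        (by simpa [show (2 * k + 1) / 2 = k by omega] using h)
    _ = k + 1 := add_comm _ _

lemma flowerSnark_edist_spoke_le (hk : 1 ≤ k) {t : Fin 4} (ht : t ≠ 3) (i : ZMod (2 * k + 1)) :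
    (flowerSnark k).edist (3, i) (t, i) ≤ 1 :=
  (SimpleGraph.edist_eq_one_iff_adj.mpr (flowerSnark_adj_spoke hk ht i)).le

lemma flowerSnark_edist_center_le (hk : 1 ≤ k) {t : Fin 4} (ht : t ≠ 3) (i j : ZMod (2 * k + 1)) :
    (flowerSnark k).edist (t, i) (3, j) ≤ k + 1 := by
  have : t = 0 ∨ t = 1 ∨ t = 2 := by revert ht; fin_cases t <;> simp
  rcases this with rfl | ht'
  · calc (flowerSnark k).edist (0, i) (3, j)
        ≤ (flowerSnark k).edist (0, i) (0, j) + (flowerSnark k).edist (0, j) (3, j) :=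
          SimpleGraph.edist_triangle
      _ ≤ k + 1 := add_le_add (flowerSnark_edist_inner_le hk i j)
          (by rw [SimpleGraph.edist_comm]; exact flowerSnark_edist_spoke_le hk ht j)
  · rw [SimpleGraph.edist_comm]
    exact flowerSnark_edist_center_outer_le hk j ht' i

lemma flowerSnark_edist_le (hk : 1 ≤ k) (u w : Fin 4 × ZMod (2 * k + 1)) :
    (flowerSnark k).edist u w ≤ k + 2 := by
  obtain ⟨s, i⟩ := u
  obtain ⟨t, j⟩ := w
  have hk₁ : (k : ℕ∞) + 1 ≤ k + 2 := by gcongr; norm_num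
  have hk₂ : (k : ℕ∞) + 1 + 1 = k + 2 := by rw [add_assoc]; norm_num
  by_cases hs : s = 3 <;> by_cases ht : t = 3
  · subst hs ht
    calc (flowerSnark k).edist (3, i) (3, j)
        ≤ (flowerSnark k).edist (3, i) (0, i) + (flowerSnark k).edist (0, i) (3, j) :=
          SimpleGraph.edist_triangle
      _ ≤ 1 + (k + 1) := add_le_add (flowerSnark_edist_spoke_le hk (by decide) i)
          (flowerSnark_edist_center_le hk (by decide) i j)
      _ = k + 2 := by rw [add_comm, hk₂]
  · subst hs
    rw [SimpleGraph.edist_comm]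
    exact (flowerSnark_edist_center_le hk ht j i).trans hk₁
  · subst ht
    exact (flowerSnark_edist_center_le hk hs i j).trans hk₁
  · calc (flowerSnark k).edist (s, i) (t, j)
        ≤ (flowerSnark k).edist (s, i) (3, j) + (flowerSnark k).edist (3, j) (t, j) :=
          SimpleGraph.edist_triangle
      _ ≤ k + 1 + 1 := add_le_add (flowerSnark_edist_center_le hk hs i j)
          (flowerSnark_edist_spoke_le hk ht j)
      _ = k + 2 := hk₂

lemma abs_natAbs_valMinAbs_add_one_sub_le (hk : 1 ≤ k) (i : ZMod (2 * k + 1)) :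
    |((i + 1).valMinAbs.natAbs : ℤ) - i.valMinAbs.natAbs| ≤ 1 := by
  have h₁ : (1 : ZMod (2 * k + 1)).valMinAbs.natAbs = 1 := by
    simpa using congrArg Int.natAbs
      (ZMod.valMinAbs_natCast_of_le_half (n := 2 * k + 1) (a := 1) (by omega))
  have hup := ZMod.natAbs_valMinAbs_le_add_sub (i + 1) i
  have hdown := ZMod.natAbs_valMinAbs_le_add_sub i (i + 1)
  rw [add_sub_cancel_left, h₁] at hup
  rw [sub_add_cancel_left, ZMod.natAbs_valMinAbs_neg, h₁] at hdown
  rw [abs_le]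
  omega

def centerPotential (k : ℕ) (p : Fin 4 × ZMod (2 * k + 1)) : ℤ :=
  if p = (3, 0) then -1 else p.2.valMinAbs.natAbs + if p.1 = 3 then 1 else 0

lemma abs_centerPotential_sub_le (hk : 1 ≤ k) {p q : Fin 4 × ZMod (2 * k + 1)}
    (h : flowerRel k p q) : |centerPotential k p - centerPotential k q| ≤ 1 := by
  obtain ⟨s, i⟩ := p
  obtain ⟨t, j⟩ := q
  rcases flowerRel_cases h with ⟨rfl, ht, rfl⟩ | ⟨hs, ht, rfl⟩
  · by_cases hi : i = 0 <;> simp [centerPotential, ht, hi]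
  · simpa [centerPotential, hs, ht, abs_sub_comm] using abs_natAbs_valMinAbs_add_one_sub_le hk i

lemma flowerSnark_le_edist_center (hk : 1 ≤ k) :
    ((k + 2 : ℕ) : ℕ∞) ≤ (flowerSnark k).edist (3, 0) (3, k) := by
  refine SimpleGraph.le_edist_of_lipschitz (f := centerPotential k) (fun p q hpq => ?_) ?_
  · obtain ⟨-, h | h⟩ := (SimpleGraph.fromRel_adj _ p q).mp hpq <;>
      linarith [abs_le.mp (abs_centerPotential_sub_le hk h)]
  · have hval : (k : ZMod (2 * k + 1)).valMinAbs = k :=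
      ZMod.valMinAbs_natCast_of_le_half (by omega)
    have hne : (k : ZMod (2 * k + 1)) ≠ 0 := fun h => by
      rw [h, ZMod.valMinAbs_zero] at hval; omega
    simp [centerPotential, hne, hval]; omega

end FlowerSnark

/-- for every k ≥ 1, the Flower snark J_{2k+1} has diameter k + 2. -/
theorem flowerSnark_diam (k : ℕ) (hk : 1 ≤ k) :
    (flowerSnark k).diam = k + 2 := by
  have h : (flowerSnark k).ediam = (k + 2 : ℕ) := le_antisymm
    (SimpleGraph.ediam_le_of_edist_le fun u w => by exact_mod_cast flowerSnark_edist_le hk u w)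
    ((flowerSnark_le_edist_center hk).trans SimpleGraph.edist_le_ediam)
  rw [SimpleGraph.diam, h, ENat.toNat_natCast]

end Pebbling
end

section
/- The Flower snark J_m has girth m for m ∈ {3, 5}, and girth 6 for every odd m ≥ 7. -/
namespace Pebbling

variable {V : Type*}

/-!
Call `v_i, x_i, y_i` the rim vertices of index `i`. Each has exactly one rim neighbour of index
`i + 1` (`rimSucc`) and one of index `i - 1`, and the hub `z_i` is joined to the three rim vertices
of index `i`. Along a closed walk the index changes, lifted to `ℤ`, add up to a multiple of
`m = 2k + 1`, and the number of spokes is even, since spokes are exactly the edges that enter or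
leave a hub. So a cycle shorter than `m` has winding number `0` and hence even length. A 4-cycle is
excluded locally: through a hub `z_i` it would give its two cycle neighbours, both of index `i`, a
second common neighbour; on the rim it cannot turn back, so it goes four steps forward and
`4 ≡ 0 (mod m)`. Hence every cycle has length at least `min m 6`, and the rim `v_0 ⋯ v_{m-1}`
and the hexagon `z_0 v_0 v_1 z_1 x_1 x_0` have lengths `m` and `6`.
-/

theorem _root_.SimpleGraph.Walk.intCast_sum_map_darts {A : Type*} [AddCommGroupWithOne A]
    {G : SimpleGraph V} {φ : G.Dart → ℤ} {g : V → A}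
    (hφ : ∀ d, (φ d : A) = g d.snd - g d.fst) {u v : V} (p : G.Walk u v) :
    ((p.darts.map φ).sum : A) = g v - g u := by
  induction p with
  | nil => simp
  | cons h p ih =>
    rw [SimpleGraph.Walk.darts_cons, List.map_cons, List.sum_cons, Int.cast_add, ih, hφ]
    abel

section

open SimpleGraph

variable {k : ℕ}

lemma two_pow_ne_zero_zmod (hk : 1 ≤ k) (j : ℕ) : (2 : ZMod (2 * k + 1)) ^ j ≠ 0 := by
  have : Fact (1 < 2 * k + 1) := ⟨by omega⟩
  refine ((IsUnit.of_mul_eq_one (k + 1 : ZMod (2 * k + 1)) ?_).pow j).ne_zero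
  have h := ZMod.natCast_self (2 * k + 1)
  push_cast at h
  linear_combination h

-- The strands `x` and `y` cross between the indices `k` and `k + 1`.
def rimSucc (k : ℕ) (p : Fin 4 × ZMod (2 * k + 1)) : Fin 4 × ZMod (2 * k + 1) :=
  (if p.2 = k then Equiv.swap 1 2 p.1 else p.1, p.2 + 1)

@[simp]
lemma rimSucc_snd (p : Fin 4 × ZMod (2 * k + 1)) : (rimSucc k p).2 = p.2 + 1 := rfl

lemma rimSucc_fst_eq_three_iff {p : Fin 4 × ZMod (2 * k + 1)} :
    (rimSucc k p).1 = 3 ↔ p.1 = 3 := by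
  unfold rimSucc
  split_ifs
  · exact (show ∀ t : Fin 4, Equiv.swap 1 2 t = 3 ↔ t = 3 by decide) p.1
  · rfl

lemma rimSucc_injective : Function.Injective (rimSucc k) := by
  rintro ⟨s, i⟩ ⟨t, j⟩ h
  simp only [rimSucc, Prod.mk.injEq, add_left_inj] at h
  obtain ⟨h1, rfl⟩ := h
  split_ifs at h1 <;> simp_all

lemma flowerRel_iff {p q : Fin 4 × ZMod (2 * k + 1)} :
    flowerRel k p q ↔
      (p.1 = 3 ∧ q.1 ≠ 3 ∧ q.2 = p.2) ∨ (p.1 ≠ 3 ∧ q = rimSucc k p) := by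
  obtain ⟨s, i⟩ := p
  obtain ⟨t, j⟩ := q
  unfold flowerRel rimSucc
  by_cases hi : i = k <;> fin_cases s <;> fin_cases t <;>
    simp [hi, eq_comm, Equiv.swap_apply_of_ne_of_ne]

variable {a b c d p q : Fin 4 × ZMod (2 * k + 1)}

lemma flowerSnark_adj_cases (h : (flowerSnark k).Adj p q) :
    (p.1 = 3 ∧ q.1 ≠ 3 ∧ q.2 = p.2) ∨ (q.1 = 3 ∧ p.1 ≠ 3 ∧ p.2 = q.2) ∨
      (p.1 ≠ 3 ∧ q = rimSucc k p) ∨ (q.1 ≠ 3 ∧ p = rimSucc k q) := by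
  rw [flowerSnark, fromRel_adj, flowerRel_iff, flowerRel_iff] at h
  tauto

lemma flowerSnark_adj_hub (t : Fin 4) (ht : t ≠ 3) (i : ZMod (2 * k + 1)) :
    (flowerSnark k).Adj (3, i) (t, i) := by
  rw [flowerSnark, fromRel_adj, flowerRel_iff]
  exact ⟨by simp [Prod.ext_iff, Ne.symm ht], .inl (.inl ⟨rfl, ht, rfl⟩)⟩

lemma flowerSnark_adj_rimSucc (hk : 1 ≤ k) (hp : p.1 ≠ 3) :
    (flowerSnark k).Adj p (rimSucc k p) := by
  rw [flowerSnark, fromRel_adj, flowerRel_iff]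
  refine ⟨fun h => ?_, .inl (.inr ⟨hp, rfl⟩)⟩
  have := congrArg Prod.snd h
  simp only [rimSucc_snd, left_eq_add] at this
  exact two_pow_ne_zero_zmod hk 0 (by simpa using this)

lemma flowerSnark_adj_succ (hk : 1 ≤ k) (t : Fin 4) (ht : t ≠ 3) (i : ZMod (2 * k + 1))
    (hi : t = 0 ∨ i ≠ k) : (flowerSnark k).Adj (t, i) (t, i + 1) := by
  convert flowerSnark_adj_rimSucc (p := (t, i)) hk ht using 1
  rcases hi with rfl | hi <;> simp [rimSucc, *, show Equiv.swap (1 : Fin 4) 2 0 = 0 by decide]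

lemma snd_eq_of_adj_hub (h : (flowerSnark k).Adj p q) (hp : p.1 = 3) : q.1 ≠ 3 ∧ q.2 = p.2 := by
  rcases flowerSnark_adj_cases h with h | ⟨-, hp', -⟩ | ⟨hp', -⟩ | ⟨hq, rfl⟩
  · exact h.2
  · exact absurd hp hp'
  · exact absurd hp hp'
  · exact absurd (rimSucc_fst_eq_three_iff.mp hp) hq

lemma eq_rimSucc_or_of_adj (h : (flowerSnark k).Adj p q) (hp : p.1 ≠ 3) (hq : q.1 ≠ 3) :
    q = rimSucc k p ∨ p = rimSucc k q := by
  rcases flowerSnark_adj_cases h with h | h | h | h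
  · exact absurd h.1 hp
  · exact absurd h.1 hq
  · exact .inl h.2
  · exact .inr h.2

lemma eq_of_adj_of_snd_eq (hk : 1 ≤ k)
    (hab : (flowerSnark k).Adj a b) (hac : (flowerSnark k).Adj a c)
    (ha : a.1 ≠ 3) (hb : b.1 ≠ 3) (hc : c.1 ≠ 3) (hbc : b.2 = c.2) : b = c := by
  rcases eq_rimSucc_or_of_adj hab ha hb with rfl | rfl <;>
    rcases eq_rimSucc_or_of_adj hac ha hc with rfl | h
  · rfl
  · refine absurd ?_ (two_pow_ne_zero_zmod hk 1)
    rw [h, rimSucc_snd, rimSucc_snd] at hbc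
    linear_combination hbc
  · refine absurd ?_ (two_pow_ne_zero_zmod hk 1)
    rw [rimSucc_snd, rimSucc_snd] at hbc
    linear_combination -hbc
  · exact rimSucc_injective h

lemma eq_rimSucc_of_adj_rimSucc (hab : b = rimSucc k a) (ha : a.1 ≠ 3)
    (hbc : (flowerSnark k).Adj b c) (hc : c.1 ≠ 3) (hac : a ≠ c) : c = rimSucc k b := by
  have hb : b.1 ≠ 3 := hab ▸ rimSucc_fst_eq_three_iff.not.mpr ha
  refine (eq_rimSucc_or_of_adj hbc hb hc).resolve_right fun hbc' => hac ?_
  exact rimSucc_injective (hab.symm.trans hbc')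

lemma four_eq_zero_of_square_of_eq_rimSucc (hab : b = rimSucc k a)
    (hbc : (flowerSnark k).Adj b c) (hcd : (flowerSnark k).Adj c d) (hda : (flowerSnark k).Adj d a)
    (ha : a.1 ≠ 3) (hc : c.1 ≠ 3) (hd : d.1 ≠ 3) (hac : a ≠ c) (hbd : b ≠ d) :
    (4 : ZMod (2 * k + 1)) = 0 := by
  have hbc' := eq_rimSucc_of_adj_rimSucc hab ha hbc hc hac
  have hb : b.1 ≠ 3 := hab ▸ rimSucc_fst_eq_three_iff.not.mpr ha
  have hcd' := eq_rimSucc_of_adj_rimSucc hbc' hb hcd hd hbd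
  have hda' := eq_rimSucc_of_adj_rimSucc hcd' hc hda ha hac.symm
  have := congrArg Prod.snd hda'
  rw [hcd', hbc', hab] at this
  simp only [rimSucc_snd] at this
  linear_combination -this

lemma not_square_of_hub (hk : 1 ≤ k) (ha : a.1 = 3)
    (hab : (flowerSnark k).Adj a b) (hbc : (flowerSnark k).Adj b c)
    (hcd : (flowerSnark k).Adj c d) (hda : (flowerSnark k).Adj d a)
    (hac : a ≠ c) (hbd : b ≠ d) : False := by
  obtain ⟨hb, hba⟩ := snd_eq_of_adj_hub hab ha
  obtain ⟨hd, hda⟩ := snd_eq_of_adj_hub hda.symm ha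
  by_cases hc : c.1 = 3
  · obtain ⟨-, hbc⟩ := snd_eq_of_adj_hub hbc.symm hc
    exact hac (Prod.ext (ha.trans hc.symm) (hba.symm.trans hbc))
  · exact hbd (eq_of_adj_of_snd_eq hk hbc.symm hcd hc hb hd (hba.trans hda.symm))

theorem flowerSnark_not_square (hk : 1 ≤ k)
    (hab : (flowerSnark k).Adj a b) (hbc : (flowerSnark k).Adj b c)
    (hcd : (flowerSnark k).Adj c d) (hda : (flowerSnark k).Adj d a)
    (hac : a ≠ c) (hbd : b ≠ d) : False := by
  by_cases ha : a.1 = 3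
  · exact not_square_of_hub hk ha hab hbc hcd hda hac hbd
  by_cases hb : b.1 = 3
  · exact not_square_of_hub hk hb hbc hcd hda hab hbd hac.symm
  by_cases hc : c.1 = 3
  · exact not_square_of_hub hk hc hcd hda hab hbc hac.symm hbd.symm
  by_cases hd : d.1 = 3
  · exact not_square_of_hub hk hd hda hab hbc hcd hbd.symm hac
  have four_ne_zero : (4 : ZMod (2 * k + 1)) ≠ 0 := by
    have := two_pow_ne_zero_zmod hk 2
    norm_num at this
    exact this
  refine four_ne_zero ?_
  rcases eq_rimSucc_or_of_adj hab ha hb with h | h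
  · exact four_eq_zero_of_square_of_eq_rimSucc h hbc hcd hda ha hc hd hac hbd
  · exact four_eq_zero_of_square_of_eq_rimSucc h hda.symm hcd.symm hbc.symm hb hd hc hbd hac

theorem flowerSnark_length_ne_four_of_isCycle (hk : 1 ≤ k) {u : Fin 4 × ZMod (2 * k + 1)}
    {p : (flowerSnark k).Walk u u} (hp : p.IsCycle) : p.length ≠ 4 := by
  intro h4
  have hadj (i : ℕ) (hi : i < 4) := p.adj_getVert_succ (h4 ▸ hi)
  have hne (i j : ℕ) (hi : i ≤ 3) (hj : j ≤ 3) (hij : i ≠ j) :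
      p.getVert i ≠ p.getVert j :=
    fun h => hij (hp.getVert_injOn' (by simp; omega) (by simp; omega) h)
  have hend : p.getVert 4 = p.getVert 0 := by
    simpa [h4] using p.getVert_length
  exact flowerSnark_not_square hk (hadj 0 (by norm_num)) (hadj 1 (by norm_num))
    (hadj 2 (by norm_num)) (hend ▸ hadj 3 (by norm_num))
    (hne 0 2 (by norm_num) (by norm_num) (by norm_num))
    (hne 1 3 (by norm_num) (by norm_num) (by norm_num))

def hubIndicator (p : Fin 4 × ZMod (2 * k + 1)) : ZMod 2 := if p.1 = 3 then 1 else 0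

def rimStep (e : (flowerSnark k).Dart) : ℤ :=
  if e.snd = rimSucc k e.fst then 1 else if e.fst = rimSucc k e.snd then -1 else 0

lemma abs_rimStep_le_one (e : (flowerSnark k).Dart) : |rimStep e| ≤ 1 := by
  unfold rimStep
  split_ifs <;> simp

lemma intCast_rimStep (e : (flowerSnark k).Dart) :
    (rimStep e : ZMod (2 * k + 1)) = e.snd.2 - e.fst.2 := by
  unfold rimStep
  split_ifs with h₁ h₂
  · simp [h₁]
  · simp [h₂]
  · rcases flowerSnark_adj_cases e.adj with h | h | h | h
    · simp [h.2.2]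
    · simp [h.2.2]
    · exact absurd h.2 h₁
    · exact absurd h.2 h₂

lemma hubIndicator_rimSucc (p : Fin 4 × ZMod (2 * k + 1)) :
    hubIndicator (rimSucc k p) = hubIndicator p := by
  simp only [hubIndicator, rimSucc_fst_eq_three_iff]

lemma intCast_rimStep_add_one (e : (flowerSnark k).Dart) :
    ((rimStep e + 1 : ℤ) : ZMod 2) = hubIndicator e.snd - hubIndicator e.fst := by
  unfold rimStep
  split_ifs with h₁ h₂
  · rw [h₁, hubIndicator_rimSucc, sub_self]
    decide
  · rw [h₂, hubIndicator_rimSucc, sub_self]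
    decide
  · rcases flowerSnark_adj_cases e.adj with h | h | h | h
    · simp only [hubIndicator, h.1, h.2.1]
      decide
    · simp only [hubIndicator, h.1, h.2.1]
      decide
    · exact absurd h.2 h₁
    · exact absurd h.2 h₂

-- The net change of index along a walk, counted in `ℤ` rather than in `ZMod (2 * k + 1)`.
def winding {u v : Fin 4 × ZMod (2 * k + 1)} (p : (flowerSnark k).Walk u v) : ℤ :=
  (p.darts.map rimStep).sum

lemma abs_winding_le_length {u v : Fin 4 × ZMod (2 * k + 1)} (p : (flowerSnark k).Walk u v) :
    |winding p| ≤ p.length := by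
  induction p with
  | nil => simp [winding]
  | cons h p ih =>
    simp only [winding, Walk.darts_cons, List.map_cons, List.sum_cons,
      Walk.length_cons, Nat.cast_succ] at ih ⊢
    linarith [abs_add_le (rimStep ⟨(_, _), h⟩) (p.darts.map rimStep).sum,
      abs_rimStep_le_one ⟨(_, _), h⟩]

lemma intCast_winding {u v : Fin 4 × ZMod (2 * k + 1)} (p : (flowerSnark k).Walk u v) :
    (winding p : ZMod (2 * k + 1)) = v.2 - u.2 :=
  p.intCast_sum_map_darts intCast_rimStep

lemma intCast_winding_add_length {u v : Fin 4 × ZMod (2 * k + 1)} (p : (flowerSnark k).Walk u v) :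
    ((winding p + p.length : ℤ) : ZMod 2) = hubIndicator v - hubIndicator u := by
  have : winding p + p.length = (p.darts.map fun e => rimStep e + 1).sum := by
    simp [winding, List.sum_map_add, Walk.length_darts]
  rw [this]
  exact p.intCast_sum_map_darts intCast_rimStep_add_one

theorem flowerSnark_min_le_length_of_isCycle (hk : 1 ≤ k) {u : Fin 4 × ZMod (2 * k + 1)}
    {p : (flowerSnark k).Walk u u} (hp : p.IsCycle) : min (2 * k + 1) 6 ≤ p.length := by
  by_contra! hlt
  have hwinding : winding p = 0 := by
    refine Int.eq_zero_of_abs_lt_dvd (m := ((2 * k + 1 : ℕ) : ℤ)) ?_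
      ((abs_winding_le_length p).trans_lt ?_)
    · rw [← ZMod.intCast_zmod_eq_zero_iff_dvd, intCast_winding, sub_self]
    · exact_mod_cast hlt.trans_le (min_le_left _ _)
  have heven : Even (p.length : ℤ) := by
    rw [← ZMod.intCast_eq_zero_iff_even, ← zero_add (p.length : ℤ), ← hwinding,
      intCast_winding_add_length, sub_self]
  have h3 := hp.three_le_length
  obtain ⟨r, hr⟩ := heven
  exact flowerSnark_length_ne_four_of_isCycle hk hp (by omega)

lemma cycleGraph_isContained_flowerSnark (hk : 1 ≤ k) :
    cycleGraph (2 * k + 1) ⊑ flowerSnark k := by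
  have : Fact (1 < 2 * k + 1) := ⟨by omega⟩
  have eq_add_one {i j : ZMod (2 * k + 1)} (h : (i - j).val = 1) : i = j + 1 :=
    eq_add_of_sub_eq' (ZMod.val_injective _ (h.trans (ZMod.val_one _).symm))
  refine ⟨⟨⟨fun i => (0, i), fun {i j} h => ?_⟩, fun i j h => (Prod.mk.inj h).2⟩⟩
  rcases cycleGraph_adj'.mp h with h | h
  · rw [eq_add_one h]
    exact (flowerSnark_adj_succ hk 0 (by decide) j (.inl rfl)).symm
  · rw [eq_add_one h]
    exact flowerSnark_adj_succ hk 0 (by decide) i (.inl rfl)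

lemma flowerSnark_exists_isCycle_length_six (hk : 1 ≤ k) :
    ∃ (u : Fin 4 × ZMod (2 * k + 1)) (p : (flowerSnark k).Walk u u),
      p.IsCycle ∧ p.length = 6 := by
  have hone : (1 : ZMod (2 * k + 1)) ≠ 0 := by simpa using two_pow_ne_zero_zmod hk 0
  have zero_ne_k : (0 : ZMod (2 * k + 1)) ≠ k := fun h => hone <| by
    have := ZMod.natCast_self (2 * k + 1)
    push_cast [← h] at this
    simpa using this
  refine ⟨(3, 0), .cons (flowerSnark_adj_hub 0 (by decide) 0)
    (.cons (flowerSnark_adj_succ hk 0 (by decide) 0 (.inl rfl))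
    (.cons (flowerSnark_adj_hub 0 (by decide) (0 + 1)).symm
    (.cons (flowerSnark_adj_hub 1 (by decide) (0 + 1))
    (.cons (flowerSnark_adj_succ hk 1 (by decide) 0 (.inr zero_ne_k)).symm
    (.cons (flowerSnark_adj_hub 1 (by decide) 0).symm .nil))))), ?_, rfl⟩
  simp [Walk.cons_isCycle_iff, Walk.isPath_def, Prod.ext_iff, hone, hone.symm]

theorem flowerSnark_egirth (hk : 1 ≤ k) : (flowerSnark k).egirth = min (2 * k + 1) 6 := by
  obtain ⟨u, p, hp, hp_len⟩ :=
    (cycleGraph_isContained_iff (by omega)).mp (cycleGraph_isContained_flowerSnark hk)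
  obtain ⟨v, q, hq, hq_len⟩ := flowerSnark_exists_isCycle_length_six hk
  refine le_antisymm ?_ (le_egirth.mpr fun w r hr => ?_)
  · rw [Nat.mono_cast.map_min]
    exact le_min ((egirth_le_length hp).trans_eq (by rw [hp_len]))
      ((egirth_le_length hq).trans_eq (by rw [hq_len]))
  · exact_mod_cast flowerSnark_min_le_length_of_isCycle hk hr

theorem flowerSnark_girth_eq_min (hk : 1 ≤ k) : (flowerSnark k).girth = min (2 * k + 1) 6 := by
  rw [girth, flowerSnark_egirth hk, ENat.toNat_natCast]

end

/-- J_m has girth m for m ∈ {3, 5} and girth 6 for every odd m ≥ 7. -/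
theorem flowerSnark_girth :
    (flowerSnark 1).girth = 3 ∧ (flowerSnark 2).girth = 5 ∧
      ∀ k : ℕ, 3 ≤ k → (flowerSnark k).girth = 6 := by
  refine ⟨?_, ?_, fun k hk => ?_⟩ <;> rw [flowerSnark_girth_eq_min (by omega)] <;> omega

end Pebbling
end
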